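/- arXiv:2502.11074 — 2 statements merged into one kernel-verified Lean document; each statement's English description precedes it below -/
import Mathlib

section
/- Let A be symmetric and B symmetric positive definite, both n×n, and let ρ* be the maximum of J(P) = trace(P^T A P)/trace(P^T B P) over P ∈ ℝ^{n×d} with P^T P = I_d. Then the maximum over the same Stiefel manifold of trace(P^T (A − ρ* B) P) equals 0. -/
/-!
As in Dinkelbach's method: on the Stiefel manifold `trace (Pᵀ B P) > 0`, so `J P ≤ ρ*` is
equivalent to `trace (Pᵀ (A - ρ* B) P) ≤ 0`, with equality exactly where `J` attains `ρ*`.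
-/

open Matrix

theorem Matrix.mulVec_injective_of_mul_eq_one {m n R : Type*} [Fintype m] [Fintype n]
    [DecidableEq n] [CommSemiring R] {P : Matrix m n R} {Q : Matrix n m R} (h : Q * P = 1) :
    Function.Injective P.mulVec :=
  Function.LeftInverse.injective (g := Q.mulVec) fun x => by rw [mulVec_mulVec, h, one_mulVec]

theorem Matrix.PosDef.trace_transpose_mul_mul_pos {m n : Type*} [Fintype m] [Fintype n]
    [DecidableEq n] [Nonempty n] {B : Matrix m m ℝ} (hB : B.PosDef) {P : Matrix m n ℝ}
    (hP : Pᵀ * P = 1) :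
    0 < (Pᵀ * B * P).trace := by
  have hPB : (Pᴴ * B * P).PosDef :=
    hB.conjTranspose_mul_mul_same (mulVec_injective_of_mul_eq_one hP)
  simpa only [conjTranspose_eq_transpose_of_trivial] using hPB.trace_pos

theorem isGreatest_sub_mul_image_of_isGreatest_div_image {ι : Type*} {S : Set ι}
    {f g : ι → ℝ} (hg : ∀ x ∈ S, 0 < g x) {ρ : ℝ}
    (hρ : IsGreatest ((fun x => f x / g x) '' S) ρ) :
    IsGreatest ((fun x => f x - ρ * g x) '' S) 0 := by
  obtain ⟨⟨x₀, hx₀, hρx₀⟩, hle⟩ := hρ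
  refine ⟨⟨x₀, hx₀, ?_⟩, ?_⟩
  · dsimp only at hρx₀ ⊢
    rw [← hρx₀, div_mul_cancel₀ _ (hg x₀ hx₀).ne', sub_self]
  · rintro _ ⟨x, hx, rfl⟩
    have hfx : f x / g x ≤ ρ := hle ⟨x, hx, rfl⟩
    rw [div_le_iff₀ (hg x hx)] at hfx
    exact sub_nonpos.mpr hfx

theorem stmt_2_general (n d : ℕ) (hd : 0 < d)
    (A B : Matrix (Fin n) (Fin n) ℝ) (hB : B.PosDef)
    (ρstar : ℝ)
    (hρ : IsGreatest
      {r : ℝ | ∃ P : Matrix (Fin n) (Fin d) ℝ, Pᵀ * P = 1 ∧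
        (Pᵀ * A * P).trace / (Pᵀ * B * P).trace = r} ρstar) :
    IsGreatest
      {r : ℝ | ∃ P : Matrix (Fin n) (Fin d) ℝ, Pᵀ * P = 1 ∧
        (Pᵀ * (A - ρstar • B) * P).trace = r} 0 := by
  have : Nonempty (Fin d) := ⟨⟨0, hd⟩⟩
  have htrace (P : Matrix (Fin n) (Fin d) ℝ) :
      (Pᵀ * (A - ρstar • B) * P).trace =
        (Pᵀ * A * P).trace - ρstar * (Pᵀ * B * P).trace := by
    rw [Matrix.mul_sub, Matrix.sub_mul, Matrix.mul_smul, Matrix.smul_mul, trace_sub, trace_smul,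
      smul_eq_mul]
  simp only [htrace]
  exact isGreatest_sub_mul_image_of_isGreatest_div_image
    (fun P hP => hB.trace_transpose_mul_mul_pos hP) hρ

theorem stmt_2 (n d : ℕ) (hd : 0 < d) (hdn : d ≤ n)
    (A B : Matrix (Fin n) (Fin n) ℝ) (hA : A.IsSymm) (hB : B.PosDef)
    (ρstar : ℝ)
    (hρ : IsGreatest
      {r : ℝ | ∃ P : Matrix (Fin n) (Fin d) ℝ, Pᵀ * P = 1 ∧
        (Pᵀ * A * P).trace / (Pᵀ * B * P).trace = r} ρstar) :
    IsGreatest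
      {r : ℝ | ∃ P : Matrix (Fin n) (Fin d) ℝ, Pᵀ * P = 1 ∧
        (Pᵀ * (A - ρstar • B) * P).trace = r} 0 :=
  stmt_2_general n d hd A B hB ρstar hρ
end

section
/- Let A, B be symmetric n×n matrices with B positive definite, and define on the Stiefel manifold the Newton iteration ρ_{k+1} = trace(P_k^T A P_k)/trace(P_k^T B P_k), where P_k maximizes trace(P^T(A − ρ_k B)P) over P^T P = I_d. Then ρ_{k+1} = ρ_k − f(ρ_k)/f'(ρ_k), where f(ρ) = max_{P^T P = I_d} trace(P^T(A − ρB)P) and f'(ρ_k) = −trace(P_k^T B P_k). -/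
/-!
If `P_k` attains the maximum defining `f(ρ_k)`, then `f(ρ_k) = tr(P_kᵀ A P_k) - ρ_k tr(P_kᵀ B P_k)`,
so the Newton step is taken on this affine function of `ρ`, whose root `tr(P_kᵀ A P_k) / tr(P_kᵀ B P_k)`
Newton's method reaches in a single step. The only analytic input is `tr(P_kᵀ B P_k) > 0`: since
`P_k` has orthonormal columns it is injective, so `P_kᵀ B P_k` is again positive definite.
-/

open Matrix

namespace Matrix

variable {m n R : Type*} [Fintype m] [Fintype n]

theorem mulVec_injective_of_mul_eq_one_s19 [CommSemiring R] [DecidableEq n]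
    {Q : Matrix n m R} {P : Matrix m n R} (h : Q * P = 1) : Function.Injective P.mulVec :=
  fun v w hvw => by simpa [mulVec_mulVec, h] using congrArg (Q *ᵥ ·) hvw

theorem trace_transpose_mul_mul_pos_of_orthonormal [Nonempty n] [DecidableEq n]
    {B : Matrix m m ℝ} (hB : B.PosDef) {P : Matrix m n ℝ} (hP : Pᵀ * P = 1) :
    0 < (Pᵀ * B * P).trace := by
  simpa [conjTranspose_eq_transpose_of_trivial] using
    (hB.conjTranspose_mul_mul_same (mulVec_injective_of_mul_eq_one_s19 hP)).trace_pos

theorem trace_mul_sub_smul_mul [CommRing R] (A B : Matrix m m R) (P : Matrix m n R) (ρ : R) :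
    (Pᵀ * (A - ρ • B) * P).trace = (Pᵀ * A * P).trace - ρ * (Pᵀ * B * P).trace := by
  rw [Matrix.mul_sub, Matrix.sub_mul, Matrix.mul_smul, Matrix.smul_mul, trace_sub, trace_smul, smul_eq_mul]

end Matrix

theorem newton_step_sub_mul_eq_div {a b : ℝ} (hb : b ≠ 0) (ρ : ℝ) :
    ρ - (a - ρ * b) / -b = a / b := by
  field_simp
  ring

theorem stmt_19_general (n d : ℕ) (hd : 0 < d)
    (A B : Matrix (Fin n) (Fin n) ℝ) (hB : B.PosDef)
    (f : ℝ → ℝ)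
    (ρk : ℝ) (Pk : Matrix (Fin n) (Fin d) ℝ)
    (hPk : Pkᵀ * Pk = 1)
    (hmax : f ρk = (Pkᵀ * (A - ρk • B) * Pk).trace) :
    (Pkᵀ * A * Pk).trace / (Pkᵀ * B * Pk).trace =
      ρk - f ρk / (-(Pkᵀ * B * Pk).trace) := by
  have : Nonempty (Fin d) := ⟨⟨0, hd⟩⟩
  have hBk : 0 < (Pkᵀ * B * Pk).trace := trace_transpose_mul_mul_pos_of_orthonormal hB hPk
  rw [hmax, trace_mul_sub_smul_mul, newton_step_sub_mul_eq_div hBk.ne']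

theorem stmt_19 (n d : ℕ) (hd : 0 < d) (hdn : d ≤ n)
    (A B : Matrix (Fin n) (Fin n) ℝ) (hA : A.IsSymm) (hB : B.PosDef)
    (f : ℝ → ℝ)
    (hf : ∀ ρ : ℝ, IsGreatest
      {r : ℝ | ∃ P : Matrix (Fin n) (Fin d) ℝ, Pᵀ * P = 1 ∧
        (Pᵀ * (A - ρ • B) * P).trace = r} (f ρ))
    (ρk : ℝ) (Pk : Matrix (Fin n) (Fin d) ℝ)
    (hPk : Pkᵀ * Pk = 1)
    (hmax : f ρk = (Pkᵀ * (A - ρk • B) * Pk).trace) :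
    (Pkᵀ * A * Pk).trace / (Pkᵀ * B * Pk).trace =
      ρk - f ρk / (-(Pkᵀ * B * Pk).trace) :=
  stmt_19_general n d hd A B hB f ρk Pk hPk hmax
end
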